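/- In the VPG construction setup: for all distinct u, v ∈ V(T), the sets ℒ_u and ℒ_v intersect (ℒ_u ∩ ℒ_v ≠ ∅) if and only if uv is an edge of T or {u, v} = {b_i, b_{(i+1) mod k}} for some 0 ≤ i ≤ k−1. That is, the L-shapes {ℒ_u} form a valid one-bend VPG representation of the graph obtained from T by adding the cycle through its leaves in the order b_0, b_1, …, b_{k−1}. -/
import Mathlib


open SimpleGraph Set Function

/-- `u` is an ancestor of `v` with respect to root `r`:
`u` lies on the unique path in `T` from `r` to `v`. -/
def IsAncestor {V : Type*} (T : SimpleGraph V) (r u v : V) : Prop :=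
  ∀ p : T.Walk r v, p.IsPath → u ∈ p.support

/-- `u` is the parent of `v` with respect to root `r`. -/
def IsParent {V : Type*} (T : SimpleGraph V) (r u v : V) : Prop :=
  IsAncestor T r u v ∧ u ≠ v ∧ T.Adj u v

/-- `L^r(u)`: the set of leaves of `T` that are descendants of `u`. -/
def LeafSet {V : Type*} (T : SimpleGraph V) [Fintype V] [DecidableRel T.Adj] (r u : V) :
    Set V :=
  {c | T.degree c = 1 ∧ IsAncestor T r u c}

/-- The leaf `c_{j mod k}` index. -/
def cidx {k : ℕ} (hk : 0 < k) (j : ℕ) : Fin k := ⟨j % k, Nat.mod_lt _ hk⟩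

/-- A set `A` of leaves is cyclically consecutive with respect to the enumeration `c`. -/
def CycConsec {V : Type*} {k : ℕ} (hk : 0 < k) (c : Fin k → V) (A : Set V) : Prop :=
  ∃ j m : ℕ, A = {x | ∃ t ≤ m, x = c (cidx hk (j + t))}

/-- The L-shape `ℒ([x₁,x₂],[y₁,y₂]) ⊆ ℝ²`. -/
def LShape (x1 x2 y1 y2 : ℝ) : Set (ℝ × ℝ) :=
  {p | p.1 = x1 ∧ y1 ≤ p.2 ∧ p.2 ≤ y2} ∪ {p | p.2 = y1 ∧ x1 ≤ p.1 ∧ p.1 ≤ x2}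

namespace VPGaux
variable {V : Type*} {T : SimpleGraph V}

lemma walk_eq (hT : T.IsTree) {a c : V} {p q : T.Walk a c} (hp : p.IsPath) (hq : q.IsPath) :
    p = q :=
  congrArg Subtype.val (hT.IsAcyclic.path_unique ⟨p, hp⟩ ⟨q, hq⟩)

lemma exists_path (hT : T.IsTree) (a c : V) : ∃ p : T.Walk a c, p.IsPath := by
  classical
  obtain ⟨w⟩ := hT.isConnected a c
  exact ⟨w.bypass, w.bypass_isPath⟩

lemma length_eq_dist (hT : T.IsTree) {a c : V} (p : T.Walk a c) (hp : p.IsPath) :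
    p.length = T.dist a c := by
  obtain ⟨q, hq, hql⟩ := hT.isConnected.exists_path_of_dist a c
  rw [walk_eq hT hp hq, hql]

lemma isPath_concat {a c x : V} {p : T.Walk a c} (hp : p.IsPath)
    (h : T.Adj c x) (hx : x ∉ p.support) : (p.concat h).IsPath := by
  rw [← Walk.isPath_reverse_iff, Walk.reverse_concat]
  exact Walk.IsPath.cons hp.reverse (by simpa using hx)

/-- on any path, distances add at an intermediate vertex -/
lemma split_dist (hT : T.IsTree) {a c u : V} (p : T.Walk a c) (hp : p.IsPath)
    (h : u ∈ p.support) : T.dist a c = T.dist a u + T.dist u c := by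
  classical
  have h1 := p.take_spec h
  have h2 : (p.takeUntil u h).length + (p.dropUntil u h).length = p.length := by
    rw [← Walk.length_append, h1]
  rw [← length_eq_dist hT p hp, ← length_eq_dist hT _ (hp.takeUntil h),
    ← length_eq_dist hT _ (hp.dropUntil h), h2]

lemma isAncestor_iff (hT : T.IsTree) {r u v : V} (p : T.Walk r v) (hp : p.IsPath) :
    IsAncestor T r u v ↔ u ∈ p.support := by
  constructor
  · exact fun ha => ha p hp
  · intro h q hq
    rwa [walk_eq hT hq hp]

lemma isAncestor_self (r v : V) : IsAncestor T r v v := fun p _ => p.end_mem_support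

lemma isAncestor_root (r v : V) : IsAncestor T r r v := fun p _ => p.start_mem_support

lemma anc_dist (hT : T.IsTree) {r u v : V} (h : IsAncestor T r u v) :
    T.dist r v = T.dist r u + T.dist u v := by
  obtain ⟨p, hp⟩ := exists_path hT r v
  exact split_dist hT p hp (h p hp)

lemma anc_trans (hT : T.IsTree) {r u v c : V} (h1 : IsAncestor T r u v)
    (h2 : IsAncestor T r v c) : IsAncestor T r u c := by
  classical
  intro p hp
  have hv := h2 p hp
  have : u ∈ (p.takeUntil v hv).support := h1 _ (hp.takeUntil hv)
  exact p.support_takeUntil_subset hv this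

lemma anc_antisymm (hT : T.IsTree) {r u v : V} (h1 : IsAncestor T r u v)
    (h2 : IsAncestor T r v u) : u = v := by
  have e1 := anc_dist hT h1
  have e2 := anc_dist hT h2
  have : T.dist u v = 0 := by omega
  exact ((hT.isConnected u v).dist_eq_zero_iff).mp this

/-- an adjacent pair is parent/child one way or the other -/
lemma adj_cases (hT : T.IsTree) {u v : V} (r : V) (hadj : T.Adj u v) :
    (IsAncestor T r u v ∧ T.dist r v = T.dist r u + 1) ∨
    (IsAncestor T r v u ∧ T.dist r u = T.dist r v + 1) := by
  classical
  have hne : u ≠ v := hadj.ne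
  have hd1 : T.dist u v = 1 := by
    rw [SimpleGraph.dist_eq_one_iff_adj]; exact hadj
  rcases le_or_gt (T.dist r u) (T.dist r v) with hle | hlt
  · left
    obtain ⟨p, hp⟩ := exists_path hT r u
    have hv : v ∉ p.support := by
      intro hv
      have := split_dist hT p hp hv
      have hvu : T.dist v u = 1 := by rw [SimpleGraph.dist_comm]; exact hd1
      omega
    have hq : (p.concat hadj).IsPath := isPath_concat hp hadj hv
    have hlen : T.dist r v = T.dist r u + 1 := by
      have := length_eq_dist hT _ hq
      rw [Walk.length_concat, length_eq_dist hT p hp] at this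
      omega
    refine ⟨?_, hlen⟩
    rw [isAncestor_iff hT _ hq]
    simp [Walk.support_concat]
  · right
    obtain ⟨p, hp⟩ := exists_path hT r v
    have hu : u ∉ p.support := by
      intro hu
      have := split_dist hT p hp hu
      omega
    have hadj' := hadj.symm
    have hq : (p.concat hadj').IsPath := isPath_concat hp hadj' hu
    have hlen : T.dist r u = T.dist r v + 1 := by
      have := length_eq_dist hT _ hq
      rw [Walk.length_concat, length_eq_dist hT p hp] at this
      omega
    refine ⟨?_, hlen⟩
    rw [isAncestor_iff hT _ hq]
    simp [Walk.support_concat]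

lemma anc_adj (hT : T.IsTree) {r u v : V} (h : IsAncestor T r u v)
    (hd : T.dist r v = T.dist r u + 1) : T.Adj u v := by
  have := anc_dist hT h
  have h1 : T.dist u v = 1 := by omega
  rw [← SimpleGraph.dist_eq_one_iff_adj]; exact h1


lemma eq_of_anc_dist (hT : T.IsTree) {r u u' v : V} (h : IsAncestor T r u v)
    (h' : IsAncestor T r u' v) (hd : T.dist r u = T.dist r u') : u = u' := by
  classical
  obtain ⟨p, hp⟩ := exists_path hT r v
  have hu := h p hp
  have hsp := split_dist hT p hp hu
  have hu' := h' p hp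
  have hsp' := split_dist hT p hp hu'
  rcases (Walk.mem_support_append_iff _ _).mp (by rw [p.take_spec hu]; exact hu') with hc | hc
  · have := split_dist hT _ (hp.takeUntil hu) hc
    have hz : T.dist u' u = 0 := by omega
    exact (((hT.isConnected u' u).dist_eq_zero_iff).mp hz).symm
  · have := split_dist hT _ (hp.dropUntil hu) hc
    have hz : T.dist u u' = 0 := by omega
    exact ((hT.isConnected u u').dist_eq_zero_iff).mp hz

/-- every non-root vertex has a parent -/
lemma parent_exists (hT : T.IsTree) {r v : V} (hvr : v ≠ r) :
    ∃ u, T.Adj u v ∧ IsAncestor T r u v ∧ T.dist r v = T.dist r u + 1 := by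
  obtain ⟨p, hp⟩ := exists_path hT r v
  obtain ⟨q, hq⟩ : ∃ q : T.Walk v r, q.IsPath := ⟨p.reverse, hp.reverse⟩
  cases q with
  | nil => exact absurd rfl hvr
  | cons hadj q' =>
    rename_i z
    rcases adj_cases hT r hadj.symm with hc | ⟨hc, hcd⟩
    · exact ⟨z, hadj.symm, hc.1, hc.2⟩
    · exfalso
      have hzs : z ∈ p.support := by
        have h0 : z ∈ (Walk.cons hadj q').support := by
          rw [Walk.support_cons]
          exact List.mem_cons_of_mem _ q'.start_mem_support
        have hrev : (Walk.cons hadj q').reverse.IsPath := hq.reverse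
        have h1 : z ∈ (Walk.cons hadj q').reverse.support := by
          rwa [Walk.support_reverse, List.mem_reverse]
        exact (isAncestor_iff hT _ hrev).mpr h1 p hp
      have hsp := split_dist hT p hp hzs
      have h1 : T.dist z v = 1 := by
        rw [SimpleGraph.dist_eq_one_iff_adj]; exact hadj.symm
      omega

lemma anc_total (hT : T.IsTree) {r u v c : V} (h1 : IsAncestor T r u c)
    (h2 : IsAncestor T r v c) : IsAncestor T r u v ∨ IsAncestor T r v u := by
  classical
  obtain ⟨p, hp⟩ := exists_path hT r c
  have hu := h1 p hp
  have hv := h2 p hp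
  rcases (Walk.mem_support_append_iff _ _).mp (by rw [p.take_spec hv]; exact hu) with hc | hc
  · left
    exact (isAncestor_iff hT _ (hp.takeUntil hv)).mpr hc
  · right
    rcases (Walk.mem_support_append_iff _ _).mp (by rw [p.take_spec hu]; exact hv) with hc' | hc'
    · exact (isAncestor_iff hT _ (hp.takeUntil hu)).mpr hc'
    · -- u on drop v, v on drop u : forces u = v
      have e1 := split_dist hT _ (hp.dropUntil hv) hc
      have e2 := split_dist hT _ (hp.dropUntil hu) hc'
      have e3 := split_dist hT p hp hu
      have e4 := split_dist hT p hp hv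
      have hz : T.dist u v = 0 := by
        have d1 : T.dist v u + T.dist u v = 0 := by omega
        omega
      have : u = v := ((hT.isConnected u v).dist_eq_zero_iff).mp hz
      subst this
      exact isAncestor_self r u

/-- unique neighbour of a degree-one vertex -/
lemma uniq_nbr [Fintype V] [DecidableRel T.Adj] {u x y : V} (hdeg : T.degree u = 1)
    (hx : T.Adj u x) (hy : T.Adj u y) : x = y := by
  obtain ⟨a, ha⟩ := Finset.card_eq_one.mp (by rw [← hdeg]; rfl : (T.neighborFinset u).card = 1)
  have hx' : x ∈ T.neighborFinset u := by rwa [SimpleGraph.mem_neighborFinset]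
  have hy' : y ∈ T.neighborFinset u := by rwa [SimpleGraph.mem_neighborFinset]
  rw [ha] at hx' hy'
  simp at hx' hy'
  rw [hx', hy']

/-- two leaves are never adjacent when some vertex has degree ≥ 2 -/
lemma leaf_not_adj [Fintype V] [DecidableRel T.Adj] (hT : T.IsTree) {u v r : V}
    (hu : T.degree u = 1) (hv : T.degree v = 1) (hr : 2 ≤ T.degree r) : ¬ T.Adj u v := by
  intro hadj
  have hur : u ≠ r := by intro e; rw [e] at hu; omega
  have hvr : v ≠ r := by intro e; rw [e] at hv; omega
  obtain ⟨p, hp⟩ := exists_path hT u r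
  cases p with
  | nil => exact hur rfl
  | cons h1 q =>
    rename_i z
    have hz : z = v := uniq_nbr hu h1 hadj
    subst hz
    cases q with
    | nil => exact hvr rfl
    | cons h2 q' =>
      rename_i z'
      have hz' : z' = u := uniq_nbr hv h2 hadj.symm
      subst hz'
      rw [Walk.cons_isPath_iff] at hp
      exact hp.2 (by
        rw [Walk.support_cons]
        exact List.mem_cons_of_mem _ q'.start_mem_support)


lemma child_exists [Fintype V] [DecidableRel T.Adj] (hT : T.IsTree) {r v : V}
    (hdeg : 2 ≤ T.degree v) :
    ∃ c, T.Adj v c ∧ IsAncestor T r v c ∧ T.dist r c = T.dist r v + 1 := by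
  by_cases hvr : v = r
  · subst hvr
    obtain ⟨c, hc⟩ : ∃ c, T.Adj v c := by
      rw [← SimpleGraph.degree_pos_iff_exists_adj]; omega
    rcases adj_cases hT v hc with h | ⟨h, hd⟩
    · exact ⟨c, hc, h.1, h.2⟩
    · exfalso; rw [SimpleGraph.dist_self] at hd; omega
  · obtain ⟨u, hu, huanc, hud⟩ := parent_exists hT hvr
    obtain ⟨c, hcmem, hcu⟩ : ∃ c ∈ T.neighborFinset v, c ≠ u := by
      apply Finset.exists_mem_ne
      rw [SimpleGraph.card_neighborFinset_eq_degree]; omega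
    rw [SimpleGraph.mem_neighborFinset] at hcmem
    rcases adj_cases hT r hcmem with h | ⟨h, hd⟩
    · exact ⟨c, hcmem, h.1, h.2⟩
    · exfalso
      exact hcu (eq_of_anc_dist hT h huanc (by omega))

lemma leaf_desc [Fintype V] [DecidableRel T.Adj] (hT : T.IsTree) {r : V} {h : ℕ}
    (hub : ∀ x, T.dist r x ≤ h) (hdeg : ∀ x, 0 < T.degree x) (v : V) :
    ∃ c, T.degree c = 1 ∧ IsAncestor T r v c := by
  have key : ∀ n (v : V), h - T.dist r v ≤ n → ∃ c, T.degree c = 1 ∧ IsAncestor T r v c := by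
    intro n
    induction n with
    | zero =>
      intro v hv
      by_cases h1 : T.degree v = 1
      · exact ⟨v, h1, isAncestor_self r v⟩
      · obtain ⟨c, _, _, hcd⟩ := child_exists hT (r := r) (v := v) (by have := hdeg v; omega)
        have := hub c
        have := hub v
        exfalso; omega
    | succ n ih =>
      intro v hv
      by_cases h1 : T.degree v = 1
      · exact ⟨v, h1, isAncestor_self r v⟩
      · obtain ⟨c, hadj, hanc, hcd⟩ := child_exists hT (r := r) (v := v) (by have := hdeg v; omega)
        obtain ⟨z, hz1, hz2⟩ := ih c (by have := hub c; omega)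
        exact ⟨z, hz1, anc_trans hT hanc hz2⟩
  exact key (h - T.dist r v) v le_rfl

-- geometry helpers
lemma mem_LShape_x {x1 x2 y1 y2 : ℝ} {p : ℝ × ℝ} (hx : x1 ≤ x2)
    (hp : p ∈ LShape x1 x2 y1 y2) : x1 ≤ p.1 ∧ p.1 ≤ x2 := by
  rcases hp with ⟨h1, h2, h3⟩ | ⟨h1, h2, h3⟩
  · constructor <;> simp [h1, hx]
  · exact ⟨h2, h3⟩

lemma mem_LShape_y {x1 x2 y1 y2 : ℝ} {p : ℝ × ℝ} (hy : y1 ≤ y2)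
    (hp : p ∈ LShape x1 x2 y1 y2) : y1 ≤ p.2 ∧ p.2 ≤ y2 := by
  rcases hp with ⟨h1, h2, h3⟩ | ⟨h1, h2, h3⟩
  · exact ⟨h2, h3⟩
  · constructor <;> simp [h1, hy]

lemma LShape_disj_x {a1 a2 a3 a4 b1 b2 b3 b4 : ℝ} (ha : a1 ≤ a2) (hb : b1 ≤ b2)
    (hsep : a2 < b1 ∨ b2 < a1) :
    ¬ (LShape a1 a2 a3 a4 ∩ LShape b1 b2 b3 b4).Nonempty := by
  rintro ⟨p, hpa, hpb⟩
  have h1 := mem_LShape_x ha hpa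
  have h2 := mem_LShape_x hb hpb
  rcases hsep with h | h <;> linarith [h1.1, h1.2, h2.1, h2.2]

lemma LShape_disj_y {a1 a2 a3 a4 b1 b2 b3 b4 : ℝ} (ha : a3 ≤ a4) (hb : b3 ≤ b4)
    (hsep : a4 < b3 ∨ b4 < a3) :
    ¬ (LShape a1 a2 a3 a4 ∩ LShape b1 b2 b3 b4).Nonempty := by
  rintro ⟨p, hpa, hpb⟩
  have h1 := mem_LShape_y ha hpa
  have h2 := mem_LShape_y hb hpb
  rcases hsep with h | h <;> linarith [h1.1, h1.2, h2.1, h2.2]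

/-- disjointness of a (low) leaf shape from a higher shape avoiding its vertical line -/
lemma LShape_disj_leaf {a1 a2 a3 a4 b1 b2 b3 b4 : ℝ} (hb : b1 ≤ b2)
    (hy : a3 < b3) (hv : a4 < b3 ∨ a1 < b1 ∨ b2 < a1) :
    ¬ (LShape a1 a2 a3 a4 ∩ LShape b1 b2 b3 b4).Nonempty := by
  rintro ⟨p, hpa, hpb⟩
  have hx := mem_LShape_x hb hpb
  have hy2 : b3 ≤ p.2 := by
    rcases hpb with ⟨h1, h2, h3⟩ | ⟨h1, h2, h3⟩
    · exact h2
    · exact le_of_eq h1.symm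
  rcases hpa with ⟨h1, h2, h3⟩ | ⟨h1, h2, h3⟩
  · rcases hv with h | h | h <;> linarith [hx.1, hx.2]
  · linarith


end VPGaux

set_option maxHeartbeats 2000000 in
/-- the L-shapes form a valid one-bend VPG representation of the graph
obtained from `T` by adding the cycle through its leaves. -/
theorem stmt11
    {V : Type*} [Fintype V] (T : SimpleGraph V) [DecidableRel T.Adj]
    (hT : T.IsTree) {k : ℕ} (hk : 3 ≤ k) (b : Fin k → V)
    (hinj : Function.Injective b)
    (hleaf : ∀ v : V, T.degree v = 1 ↔ ∃ i : Fin k, v = b i)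
    (r' : V) (hr' : 2 ≤ T.degree r')
    (hconsec : ∀ u : V, 2 ≤ T.degree u → ∃ s t : Fin k, s ≤ t ∧
        LeafSet T r' u = {x | ∃ j : Fin k, s ≤ j ∧ j ≤ t ∧ x = b j})
    (hpath0 : ∀ p : T.Walk (b ⟨0, by omega⟩) r', p.IsPath →
        ∀ w ∈ p.support, w ≠ b ⟨0, by omega⟩ → w ≠ r' → ∃ z : V, LeafSet T r' w = {z})
    (hpath1 : ∀ p : T.Walk (b ⟨1, by omega⟩) r', p.IsPath →
        ∀ w ∈ p.support, w ≠ b ⟨1, by omega⟩ → w ≠ r' → ∃ z : V, LeafSet T r' w = {z})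
    (h : ℕ) (hmax : IsGreatest (Set.range fun u : V => T.dist r' u) h)
    (lx rx ly ry : V → ℝ)
    (hb0 : lx (b ⟨0, by omega⟩) = 1.5 ∧ rx (b ⟨0, by omega⟩) = (k : ℝ) - 1 ∧
      ly (b ⟨0, by omega⟩) = 0 ∧
      ry (b ⟨0, by omega⟩) = (h : ℝ) - (T.dist r' (b ⟨0, by omega⟩) : ℝ) + 2)
    (hb1 : lx (b ⟨1, by omega⟩) = 1 ∧ rx (b ⟨1, by omega⟩) = 2 ∧
      ly (b ⟨1, by omega⟩) = 1 ∧
      ry (b ⟨1, by omega⟩) = (h : ℝ) - (T.dist r' (b ⟨1, by omega⟩) : ℝ) + 2)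
    (hbk : lx (b ⟨k - 1, by omega⟩) = (k : ℝ) - 1 ∧ rx (b ⟨k - 1, by omega⟩) = (k : ℝ) ∧
      ly (b ⟨k - 1, by omega⟩) = 0 ∧
      ry (b ⟨k - 1, by omega⟩) = (h : ℝ) - (T.dist r' (b ⟨k - 1, by omega⟩) : ℝ) + 2)
    (hbi : ∀ i : Fin k, 2 ≤ (i : ℕ) → (i : ℕ) ≤ k - 2 →
      lx (b i) = ((i : ℕ) : ℝ) ∧ rx (b i) = ((i : ℕ) : ℝ) + 1 ∧ ly (b i) = 1 ∧
      ry (b i) = (h : ℝ) - (T.dist r' (b i) : ℝ) + 2)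
    (hintv : ∀ v : V, 2 ≤ T.degree v →
      lx v = sInf (lx '' LeafSet T r' v) ∧ rx v = sSup (lx '' LeafSet T r' v) ∧
      ly v = (h : ℝ) - (T.dist r' v : ℝ) + 1 ∧ ry v = (h : ℝ) - (T.dist r' v : ℝ) + 2)
    :
    ∀ u v : V, u ≠ v →
      ((LShape (lx u) (rx u) (ly u) (ry u) ∩
          LShape (lx v) (rx v) (ly v) (ry v)).Nonempty ↔
        (T.Adj u v ∨ ∃ i : Fin k,
          (u = b i ∧ v = b (cidx (by omega) ((i : ℕ) + 1))) ∨
          (v = b i ∧ u = b (cidx (by omega) ((i : ℕ) + 1))))) := by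
  classical
  intro u v huv
  have hk0 : 0 < k := by omega
  have conn := hT.isConnected
  have hub : ∀ x, T.dist r' x ≤ h := fun x => hmax.2 ⟨x, rfl⟩
  have hdegpos : ∀ x, 0 < T.degree x := by
    intro x
    by_cases hx : x = r'
    · subst hx; omega
    · obtain ⟨p, hp⟩ := VPGaux.exists_path hT x r'
      cases p with
      | nil => exact absurd rfl hx
      | cons hadj q => exact (SimpleGraph.degree_pos_iff_exists_adj T x).mpr ⟨_, hadj⟩
  have hdeg_b : ∀ i : Fin k, T.degree (b i) = 1 := fun i => (hleaf (b i)).mpr ⟨i, rfl⟩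
  have hne_r : ∀ i : Fin k, b i ≠ r' := by
    intro i e; have := hdeg_b i; rw [e] at this; omega
  have hd_b : ∀ i : Fin k, 1 ≤ T.dist r' (b i) := by
    intro i
    have : T.dist r' (b i) ≠ 0 := by
      intro e
      exact hne_r i (((conn.dist_eq_zero_iff).mp e).symm)
    omega
  have hmkval : ∀ (n : ℕ) (hn : n < k), ((⟨n, hn⟩ : Fin k) : ℕ) = n := fun _ _ => rfl
  have hk3 : (3:ℝ) ≤ (k:ℝ) := by exact_mod_cast hk
  have hkcast : ((k-1:ℕ):ℝ) = (k:ℝ) - 1 := by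
    rw [Nat.cast_sub (by omega)]; norm_num
  have hfin : ∀ i : Fin k, i = ⟨0, hk0⟩ ∨ i = ⟨1, by omega⟩ ∨
      (2 ≤ i.val ∧ i.val ≤ k-2) ∨ i = ⟨k-1, by omega⟩ := by
    intro i
    have hlt := i.isLt
    rcases Nat.lt_or_ge i.val 2 with h2 | h2
    · rcases Nat.lt_or_ge i.val 1 with h1 | h1
      · left; exact Fin.ext (by simp only [Fin.val_mk]; omega)
      · right; left; exact Fin.ext (by simp only [Fin.val_mk]; omega)
    · rcases Nat.lt_or_ge i.val (k-1) with h3 | h3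
      · right; right; left; omega
      · right; right; right; exact Fin.ext (by simp only [Fin.val_mk]; omega)
  have hlxval : ∀ i : Fin k, 2 ≤ i.val → lx (b i) = (i.val : ℝ) := by
    intro i hi
    by_cases hik : i.val ≤ k - 2
    · exact (hbi i hi hik).1
    · have hival : i = ⟨k-1, by omega⟩ := Fin.ext (by simp only [Fin.val_mk]; have := i.isLt; omega)
      rw [hival, hbk.1]
      have : ((⟨k-1, by omega⟩ : Fin k) : ℕ) = k - 1 := rfl
      rw [this, hkcast]
  have hryeq : ∀ i : Fin k, ry (b i) = (h : ℝ) - (T.dist r' (b i) : ℝ) + 2 := by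
    intro i
    rcases hfin i with e | e | ⟨e1, e2⟩ | e
    · rw [e]; exact hb0.2.2.2
    · rw [e]; exact hb1.2.2.2
    · exact (hbi i e1 e2).2.2.2
    · rw [e]; exact hbk.2.2.2
  have hry2 : ∀ i : Fin k, 2 ≤ ry (b i) := by
    intro i
    rw [hryeq i]
    have h1 := hub (b i)
    have : (T.dist r' (b i) : ℝ) ≤ (h : ℝ) := by exact_mod_cast h1
    linarith
  have hly01 : ∀ i : Fin k, 0 ≤ ly (b i) ∧ ly (b i) ≤ 1 := by
    intro i
    rcases hfin i with e | e | ⟨e1, e2⟩ | e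
    · rw [e, hb0.2.2.1]; norm_num
    · rw [e, hb1.2.2.1]; norm_num
    · rw [(hbi i e1 e2).2.2.1]; norm_num
    · rw [e, hbk.2.2.1]; norm_num
  have hlyry : ∀ i : Fin k, ly (b i) ≤ ry (b i) := by
    intro i
    have := hly01 i
    have := hry2 i
    linarith
  have hlx_ge1 : ∀ i : Fin k, 1 ≤ lx (b i) := by
    intro i
    rcases hfin i with e | e | ⟨e1, e2⟩ | e
    · rw [e, hb0.1]; norm_num
    · rw [e, hb1.1]
    · rw [hlxval i e1]
      have : (2:ℝ) ≤ (i.val : ℝ) := by exact_mod_cast e1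
      linarith
    · rw [e, hbk.1]; linarith
  have hlx_lek : ∀ i : Fin k, lx (b i) ≤ (k:ℝ) - 1 := by
    intro i
    rcases hfin i with e | e | ⟨e1, e2⟩ | e
    · rw [e, hb0.1]; norm_num; linarith
    · rw [e, hb1.1]; linarith
    · rw [hlxval i e1]
      have : (i.val : ℝ) ≤ ((k-2:ℕ):ℝ) := by exact_mod_cast e2
      have h2 : ((k-2:ℕ):ℝ) = (k:ℝ) - 2 := by rw [Nat.cast_sub (by omega)]; norm_num
      linarith
    · rw [e, hbk.1]
  -- depth of internal vertices
  have hidepth : ∀ w, 2 ≤ T.degree w → T.dist r' w + 1 ≤ h := by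
    intro w hw
    obtain ⟨c, _, _, hcd⟩ := VPGaux.child_exists hT (r := r') (v := w) hw
    have := hub c
    omega
  -- internal coordinates: r'
  have hr'c : lx r' = 1 ∧ rx r' = (k:ℝ) - 1 ∧ ly r' = (h:ℝ) + 1 ∧ ry r' = (h:ℝ) + 2 := by
    obtain ⟨e1, e2, e3, e4⟩ := hintv r' hr'
    have hmemLS : ∀ j : Fin k, b j ∈ LeafSet T r' r' :=
      fun j => ⟨hdeg_b j, VPGaux.isAncestor_root r' (b j)⟩
    have hIL : IsLeast (lx '' LeafSet T r' r') 1 := by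
      constructor
      · exact ⟨b ⟨1, by omega⟩, hmemLS _, hb1.1⟩
      · rintro x ⟨y, hy, rfl⟩
        obtain ⟨j, rfl⟩ := (hleaf y).mp hy.1
        exact hlx_ge1 j
    have hIG : IsGreatest (lx '' LeafSet T r' r') ((k:ℝ)-1) := by
      constructor
      · exact ⟨b ⟨k-1, by omega⟩, hmemLS _, hbk.1⟩
      · rintro x ⟨y, hy, rfl⟩
        obtain ⟨j, rfl⟩ := (hleaf y).mp hy.1
        exact hlx_lek j
    have hd0 : T.dist r' r' = 0 := SimpleGraph.dist_self
    rw [hd0] at e3 e4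
    norm_num at e3 e4
    exact ⟨by rw [e1, hIL.csInf_eq], by rw [e2, hIG.csSup_eq], e3, e4⟩
  -- internal structure for non-root internal vertices
  have hstruct : ∀ w, 2 ≤ T.degree w → w ≠ r' → ∃ s t : Fin k, s ≤ t ∧
      (s.val = 0 → t.val = 0) ∧ (s.val = 1 → t.val = 1) ∧
      LeafSet T r' w = {x | ∃ j : Fin k, s ≤ j ∧ j ≤ t ∧ x = b j} ∧
      lx w = lx (b s) ∧ rx w = lx (b t) := by
    intro w hw hwr
    obtain ⟨s, t, hst, hLS⟩ := hconsec w hw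
    have hbs_mem : b s ∈ LeafSet T r' w := by rw [hLS]; exact ⟨s, le_rfl, hst, rfl⟩
    have hbt_mem : b t ∈ LeafSet T r' w := by rw [hLS]; exact ⟨t, hst, le_rfl, rfl⟩
    rcases Nat.lt_or_ge s.val 2 with hs2 | hs2
    · have hz : ∃ z, LeafSet T r' w = {z} := by
        rcases Nat.lt_or_ge s.val 1 with hs1 | hs1
        · have es : s = ⟨0, hk0⟩ := Fin.ext (by simp only [Fin.val_mk]; omega)
          obtain ⟨p, hp⟩ := VPGaux.exists_path hT r' (b ⟨0, hk0⟩)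
          have hanc : IsAncestor T r' w (b ⟨0, hk0⟩) := by rw [← es]; exact hbs_mem.2
          exact hpath0 p.reverse hp.reverse w
            (by rw [Walk.support_reverse, List.mem_reverse]; exact hanc p hp)
            (by intro e; rw [e] at hw; have := hdeg_b ⟨0, hk0⟩; omega) hwr
        · have es : s = ⟨1, by omega⟩ := Fin.ext (by simp only [Fin.val_mk]; omega)
          obtain ⟨p, hp⟩ := VPGaux.exists_path hT r' (b ⟨1, by omega⟩)
          have hanc : IsAncestor T r' w (b ⟨1, by omega⟩) := by rw [← es]; exact hbs_mem.2
          exact hpath1 p.reverse hp.reverse w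
            (by rw [Walk.support_reverse, List.mem_reverse]; exact hanc p hp)
            (by intro e; rw [e] at hw; have := hdeg_b ⟨1, (by omega : 1 < k)⟩; omega) hwr
      obtain ⟨z, hz⟩ := hz
      have h1 : b s = z := by
        have := hbs_mem; rw [hz] at this; exact this
      have h2 : b t = z := by
        have := hbt_mem; rw [hz] at this; exact this
      have hst' : s = t := hinj (h1.trans h2.symm)
      have hLS' : LeafSet T r' w = {b s} := by rw [hz, ← h1]
      refine ⟨s, s, le_rfl, fun e => e, fun e => e, ?_, ?_, ?_⟩
      · rw [hLS, ← hst']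
      · rw [(hintv w hw).1, hLS', Set.image_singleton, csInf_singleton]
      · rw [(hintv w hw).2.1, hLS', Set.image_singleton, csSup_singleton]
    · refine ⟨s, t, hst, by omega, by omega, hLS, ?_, ?_⟩
      · rw [(hintv w hw).1]
        have hIL : IsLeast (lx '' LeafSet T r' w) (lx (b s)) := by
          constructor
          · exact ⟨b s, hbs_mem, rfl⟩
          · rintro x ⟨y, hy, rfl⟩
            rw [hLS] at hy
            obtain ⟨j, hsj, hjt, rfl⟩ := hy
            rw [Fin.le_def] at hsj
            rw [hlxval s hs2, hlxval j (by omega)]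
            exact_mod_cast hsj
        rw [hIL.csInf_eq]
      · rw [(hintv w hw).2.1]
        have hIG : IsGreatest (lx '' LeafSet T r' w) (lx (b t)) := by
          constructor
          · exact ⟨b t, hbt_mem, rfl⟩
          · rintro x ⟨y, hy, rfl⟩
            rw [hLS] at hy
            obtain ⟨j, hsj, hjt, rfl⟩ := hy
            rw [Fin.le_def] at hsj hjt
            rw [hlxval t (by omega), hlxval j (by omega)]
            exact_mod_cast hjt
        rw [hIG.csSup_eq]
  have hbetween : ∀ s t j : Fin k, (s.val = 0 → t.val = 0) → (s.val = 1 → t.val = 1) →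
      s ≤ j → j ≤ t → lx (b s) ≤ lx (b j) ∧ lx (b j) ≤ lx (b t) := by
    intro s t j h0 h1 hsj hjt
    rw [Fin.le_def] at hsj hjt
    rcases Nat.lt_or_ge s.val 2 with hs | hs
    · rcases Nat.lt_or_ge s.val 1 with hs1 | hs1
      · have ht := h0 (by omega)
        have e1 : s = j := Fin.ext (by omega)
        have e2 : j = t := Fin.ext (by omega)
        rw [e1, e2]
        exact ⟨le_rfl, le_rfl⟩
      · have ht := h1 (by omega)
        have e1 : s = j := Fin.ext (by omega)
        have e2 : j = t := Fin.ext (by omega)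
        rw [e1, e2]
        exact ⟨le_rfl, le_rfl⟩
    · rw [hlxval s hs, hlxval j (by omega), hlxval t (by omega)]
      exact ⟨by exact_mod_cast hsj, by exact_mod_cast hjt⟩
  -- bounds for internal vertices
  have hintbounds : ∀ w, 2 ≤ T.degree w → lx w ≤ rx w ∧ 1 ≤ lx w ∧ rx w ≤ (k:ℝ)-1 := by
    intro w hw
    by_cases hwr : w = r'
    · subst hwr
      rw [hr'c.1, hr'c.2.1]
      refine ⟨by linarith, le_rfl, le_rfl⟩
    · obtain ⟨s, t, hst, h0, h1, _, el, er⟩ := hstruct w hw hwr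
      rw [el, er]
      exact ⟨(hbetween s t t h0 h1 hst le_rfl).1, hlx_ge1 s, hlx_lek t⟩
  have hlyw : ∀ w, 2 ≤ T.degree w → ly w = (h:ℝ) - (T.dist r' w : ℝ) + 1 ∧
      ry w = (h:ℝ) - (T.dist r' w : ℝ) + 2 ∧ (2:ℝ) ≤ ly w := by
    intro w hw
    obtain ⟨_, _, e3, e4⟩ := hintv w hw
    refine ⟨e3, e4, ?_⟩
    have := hidepth w hw
    have : (T.dist r' w : ℝ) + 1 ≤ (h:ℝ) := by exact_mod_cast this
    rw [e3]; linarith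
  -- case lemmas
  have hLL : ∀ i j : Fin k, i.val < j.val →
      ((LShape (lx (b i)) (rx (b i)) (ly (b i)) (ry (b i)) ∩
        LShape (lx (b j)) (rx (b j)) (ly (b j)) (ry (b j))).Nonempty ↔
      (T.Adj (b i) (b j) ∨ ∃ m : Fin k,
        (b i = b m ∧ b j = b (cidx hk0 ((m : ℕ) + 1))) ∨
        (b j = b m ∧ b i = b (cidx hk0 ((m : ℕ) + 1))))) := by
    intro i j hij
    have hilt := i.isLt
    have hjlt := j.isLt
    have hnadj : ¬ T.Adj (b i) (b j) := VPGaux.leaf_not_adj hT (hdeg_b i) (hdeg_b j) hr'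
    by_cases hcyc : j.val = i.val + 1 ∨ (i.val = 0 ∧ j.val = k - 1)
    · apply iff_of_true
      · -- shapes intersect
        rcases hcyc with hc | ⟨hc1, hc2⟩
        · -- j = i+1
          rcases hfin i with ei | ei | ⟨ei1, ei2⟩ | ei
          · -- i = 0, j = 1
            have ej : j = ⟨1, by omega⟩ := Fin.ext (by
              simp only [Fin.val_mk]
              have : i.val = 0 := by rw [ei]
              omega)
            rw [ei, ej]
            refine ⟨(1.5, 1), Or.inl ⟨?_, ?_, ?_⟩, Or.inr ⟨?_, ?_, ?_⟩⟩
            · rw [hb0.1]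
            · rw [hb0.2.2.1]; norm_num
            · show (1:ℝ) ≤ ry (b ⟨0, hk0⟩); linarith [hry2 ⟨0, hk0⟩]
            · rw [hb1.2.2.1]
            · rw [hb1.1]; norm_num
            · rw [hb1.2.1]; norm_num
          · -- i = 1, j = 2
            have hiv : i.val = 1 := by rw [ei]
            have hjv : j.val = 2 := by omega
            by_cases hk4 : 4 ≤ k
            · -- j is a middle leaf
              obtain ⟨lb1, lb2, lb3, lb4⟩ := hbi j (by omega) (by omega)
              rw [ei]
              refine ⟨(2, 1), Or.inr ⟨?_, ?_, ?_⟩, Or.inl ⟨?_, ?_, ?_⟩⟩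
              · rw [hb1.2.2.1]
              · rw [hb1.1]; norm_num
              · rw [hb1.2.1]
              · rw [lb1]; show (2:ℝ) = ((j.val:ℕ):ℝ); exact_mod_cast hjv.symm
              · rw [lb3]
              · show (1:ℝ) ≤ ry (b j); linarith [hry2 j]
            · -- k = 3, j = k-1
              have hkk : k = 3 := by omega
              have ej : j = ⟨k-1, by omega⟩ := Fin.ext (by simp only [Fin.val_mk]; omega)
              have hkr : (k:ℝ) = 3 := by exact_mod_cast hkk
              rw [ei, ej]
              refine ⟨(2, 1), Or.inr ⟨?_, ?_, ?_⟩, Or.inl ⟨?_, ?_, ?_⟩⟩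
              · rw [hb1.2.2.1]
              · rw [hb1.1]; norm_num
              · rw [hb1.2.1]
              · rw [hbk.1, hkr]; norm_num
              · rw [hbk.2.2.1]; norm_num
              · show (1:ℝ) ≤ ry (b ⟨k-1, by omega⟩); linarith [hry2 ⟨k-1, (by omega : k-1 < k)⟩]
          · -- i middle, j = i+1
            obtain ⟨la1, la2, la3, la4⟩ := hbi i ei1 ei2
            by_cases hjk : j.val ≤ k - 2
            · obtain ⟨lb1, lb2, lb3, lb4⟩ := hbi j (by omega) hjk
              have hcast : ((j.val:ℕ):ℝ) = (i.val:ℝ) + 1 := by exact_mod_cast hc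
              refine ⟨((j.val:ℝ), 1), Or.inr ⟨?_, ?_, ?_⟩, Or.inl ⟨?_, ?_, ?_⟩⟩
              · rw [la3]
              · rw [la1]; show (i.val:ℝ) ≤ (j.val:ℝ); linarith
              · rw [la2]; show ((j.val:ℕ):ℝ) ≤ (i.val:ℝ) + 1; linarith
              · rw [lb1]
              · rw [lb3]
              · show (1:ℝ) ≤ ry (b j); linarith [hry2 j]
            · -- j = k-1
              have ej : j = ⟨k-1, by omega⟩ := Fin.ext (by simp only [Fin.val_mk]; omega)
              have hiv : (i.val:ℝ) = (k:ℝ) - 2 := by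
                have : i.val = k - 2 := by omega
                rw [this, Nat.cast_sub (by omega)]; norm_num
              rw [ej]
              refine ⟨((k:ℝ) - 1, 1), Or.inr ⟨?_, ?_, ?_⟩, Or.inl ⟨?_, ?_, ?_⟩⟩
              · rw [la3]
              · rw [la1]; show (i.val:ℝ) ≤ (k:ℝ) - 1; linarith
              · rw [la2]; show (k:ℝ) - 1 ≤ (i.val:ℝ) + 1; linarith
              · rw [hbk.1]
              · rw [hbk.2.2.1]; norm_num
              · show (1:ℝ) ≤ ry (b ⟨k-1, by omega⟩); linarith [hry2 ⟨k-1, (by omega : k-1 < k)⟩]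
          · -- i = k-1 impossible
            exfalso
            have : i.val = k - 1 := by rw [ei]
            omega
        · -- i = 0, j = k-1
          have ei : i = ⟨0, hk0⟩ := Fin.ext (by simp only [Fin.val_mk]; omega)
          have ej : j = ⟨k-1, by omega⟩ := Fin.ext (by simp only [Fin.val_mk]; omega)
          rw [ei, ej]
          refine ⟨((k:ℝ) - 1, 0), Or.inr ⟨?_, ?_, ?_⟩, Or.inl ⟨?_, ?_, ?_⟩⟩
          · rw [hb0.2.2.1]
          · rw [hb0.1]; linarith
          · rw [hb0.2.1]
          · rw [hbk.1]
          · rw [hbk.2.2.1]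
          · show (0:ℝ) ≤ ry (b ⟨k-1, by omega⟩); linarith [hry2 ⟨k-1, (by omega : k-1 < k)⟩]
      · -- RHS holds
        rcases hcyc with hc | ⟨hc1, hc2⟩
        · refine Or.inr ⟨i, Or.inl ⟨rfl, congrArg b (Fin.ext ?_)⟩⟩
          show j.val = (i.val + 1) % k
          rw [Nat.mod_eq_of_lt (by omega)]
          omega
        · refine Or.inr ⟨j, Or.inr ⟨rfl, congrArg b (Fin.ext ?_)⟩⟩
          show i.val = (j.val + 1) % k
          rw [show j.val + 1 = k by omega, Nat.mod_self]
          omega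
    · push_neg at hcyc
      obtain ⟨hn1, hn2⟩ := hcyc
      apply iff_of_false
      · -- shapes disjoint
        rcases hfin i with ei | ei | ⟨ei1, ei2⟩ | ei
        · -- i = 0, j middle
          have hiv : i.val = 0 := by rw [ei]
          have hj2 : 2 ≤ j.val := by omega
          have hjk2 : j.val ≤ k - 2 := by
            have := hn2 hiv
            omega
          obtain ⟨lb1, lb2, lb3, lb4⟩ := hbi j hj2 hjk2
          have hjc : (2:ℝ) ≤ (j.val:ℝ) := by exact_mod_cast hj2
          rw [ei]
          rintro ⟨p, (⟨e1,e2,e3⟩|⟨e1,e2,e3⟩), (⟨f1,f2,f3⟩|⟨f1,f2,f3⟩)⟩ <;>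
            linarith [hb0.1, hb0.2.2.1, lb1, lb3, hjc]
        · -- i = 1
          have hiv : i.val = 1 := by rw [ei]
          have hj3 : 3 ≤ j.val := by omega
          have hbnd : lx (b j) ≤ rx (b j) ∧ (3:ℝ) ≤ lx (b j) := by
            by_cases hjk : j.val ≤ k - 2
            · obtain ⟨lb1, lb2, lb3, lb4⟩ := hbi j (by omega) hjk
              have : (3:ℝ) ≤ (j.val:ℝ) := by exact_mod_cast hj3
              rw [lb1, lb2]
              constructor <;> linarith
            · have ej : j = ⟨k-1, by omega⟩ := Fin.ext (by simp only [Fin.val_mk]; omega)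
              have hk4 : (4:ℝ) ≤ (k:ℝ) := by
                have : 4 ≤ k := by omega
                exact_mod_cast this
              rw [ej, hbk.1, hbk.2.1]
              constructor <;> linarith
          apply VPGaux.LShape_disj_x (by rw [ei, hb1.1, hb1.2.1]; norm_num) hbnd.1
          left
          rw [ei, hb1.2.1]
          linarith [hbnd.2]
        · -- i middle
          obtain ⟨la1, la2, la3, la4⟩ := hbi i ei1 ei2
          have hji : i.val + 2 ≤ j.val := by omega
          have hcast : (i.val:ℝ) + 2 ≤ (j.val:ℝ) := by exact_mod_cast hji
          have hbnd : lx (b j) ≤ rx (b j) ∧ (i.val:ℝ) + 2 ≤ lx (b j) := by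
            by_cases hjk : j.val ≤ k - 2
            · obtain ⟨lb1, lb2, lb3, lb4⟩ := hbi j (by omega) hjk
              rw [lb1, lb2]
              constructor <;> linarith
            · have ej : j = ⟨k-1, by omega⟩ := Fin.ext (by simp only [Fin.val_mk]; omega)
              have hjr : (j.val:ℝ) = (k:ℝ) - 1 := by
                rw [show j.val = k - 1 by omega, Nat.cast_sub (by omega)]; norm_num
              rw [ej, hbk.1, hbk.2.1]
              constructor <;> linarith [hcast, hjr]
          apply VPGaux.LShape_disj_x (by rw [la1, la2]; linarith) hbnd.1
          left
          rw [la2]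
          linarith [hbnd.2]
        · exfalso
          have : i.val = k - 1 := by rw [ei]
          omega
      · -- RHS fails
        rintro (hadj | ⟨m, ⟨e1, e2⟩ | ⟨e1, e2⟩⟩)
        · exact hnadj hadj
        · have em : i = m := hinj e1
          have ej : j.val = (m.val + 1) % k := congrArg Fin.val (hinj e2)
          rw [← em] at ej
          rcases Nat.lt_or_ge (i.val + 1) k with hlt | hge
          · rw [Nat.mod_eq_of_lt hlt] at ej
            exact hn1 ej
          · omega
        · have em : j = m := hinj e1
          have ej : i.val = (m.val + 1) % k := congrArg Fin.val (hinj e2)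
          rw [← em] at ej
          rcases Nat.lt_or_ge (j.val + 1) k with hlt | hge
          · rw [Nat.mod_eq_of_lt hlt] at ej
            omega
          · rw [show j.val + 1 = k by omega, Nat.mod_self] at ej
            exact hn2 ej (by omega)
  have hLI : ∀ (i : Fin k) (w : V), 2 ≤ T.degree w →
      ((LShape (lx (b i)) (rx (b i)) (ly (b i)) (ry (b i)) ∩
        LShape (lx w) (rx w) (ly w) (ry w)).Nonempty ↔
      (T.Adj (b i) w ∨ ∃ m : Fin k,
        (b i = b m ∧ w = b (cidx hk0 ((m : ℕ) + 1))) ∨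
        (w = b m ∧ b i = b (cidx hk0 ((m : ℕ) + 1))))) := by
    intro i w hw
    have hwnotb : ∀ m : Fin k, w ≠ b m := by
      intro m e; have := hdeg_b m; rw [e] at hw; omega
    have hRiff : (T.Adj (b i) w ∨ ∃ m : Fin k,
        (b i = b m ∧ w = b (cidx hk0 ((m : ℕ) + 1))) ∨
        (w = b m ∧ b i = b (cidx hk0 ((m : ℕ) + 1)))) ↔ T.Adj (b i) w := by
      constructor
      · rintro (hadj | ⟨m, ⟨e1, e2⟩ | ⟨e1, e2⟩⟩)
        · exact hadj
        · exact absurd e2 (hwnotb _)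
        · exact absurd e1 (hwnotb _)
      · exact Or.inl
    rw [hRiff]
    have hwb : w ≠ b i := hwnotb i
    obtain ⟨e3, e4, hly2⟩ := hlyw w hw
    by_cases hanc : IsAncestor T r' w (b i)
    · have hdd := VPGaux.anc_dist hT hanc
      have hdp : 1 ≤ T.dist w (b i) := by
        have : T.dist w (b i) ≠ 0 := fun e => hwb ((conn.dist_eq_zero_iff).mp e)
        omega
      by_cases hone : T.dist r' (b i) = T.dist r' w + 1
      · have hadj : T.Adj w (b i) := VPGaux.anc_adj hT hanc hone
        apply iff_of_true _ (hadj.symm)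
        have hryi : ry (b i) = ly w := by
          rw [hryeq i, e3, hone]
          push_cast
          ring
        have hxbounds : lx w ≤ lx (b i) ∧ lx (b i) ≤ rx w := by
          by_cases hwr : w = r'
          · subst hwr; rw [hr'c.1, hr'c.2.1]; exact ⟨hlx_ge1 i, hlx_lek i⟩
          · obtain ⟨s, t, hst, h0, h1, hblk, el, er⟩ := hstruct w hw hwr
            have hmem : b i ∈ LeafSet T r' w := ⟨hdeg_b i, hanc⟩
            rw [hblk] at hmem
            obtain ⟨m, hsm, hmt, hbm⟩ := hmem
            have him : i = m := hinj hbm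
            rw [el, er, him]
            exact hbetween s t m h0 h1 hsm hmt
        refine ⟨(lx (b i), ly w), Or.inl ⟨rfl, ?_, ?_⟩, Or.inr ⟨rfl, hxbounds.1, hxbounds.2⟩⟩
        · show ly (b i) ≤ ly w; linarith [(hly01 i).2, hly2]
        · show ly w ≤ ry (b i); rw [hryi]
      · apply iff_of_false
        · apply VPGaux.LShape_disj_y (hlyry i) (by rw [e3, e4]; linarith)
          left
          rw [hryeq i, e3]
          have hgap : T.dist r' w + 2 ≤ T.dist r' (b i) := by omega
          have hc : (T.dist r' w : ℝ) + 2 ≤ (T.dist r' (b i) : ℝ) := by exact_mod_cast hgap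
          linarith
        · intro hadj
          rcases VPGaux.adj_cases hT r' hadj with ⟨ha, hd⟩ | ⟨ha, hd⟩
          · omega
          · exact hone hd
    · apply iff_of_false
      · have hwr : w ≠ r' := fun e => hanc (by rw [e]; exact VPGaux.isAncestor_root r' (b i))
        obtain ⟨s, t, hst, h0, h1, hblk, el, er⟩ := hstruct w hw hwr
        have hnotin : ¬ (s.val ≤ i.val ∧ i.val ≤ t.val) := by
          rintro ⟨h1', h2'⟩
          exact hanc (show b i ∈ LeafSet T r' w by
            rw [hblk]; exact ⟨i, h1', h2', rfl⟩).2
        have hstv : s.val ≤ t.val := hst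
        have hsep : lx (b i) < lx (b s) ∨ lx (b t) < lx (b i) := by
          rcases Nat.lt_or_ge i.val s.val with hlt | hge
          · -- i before the block
            rcases Nat.lt_or_ge i.val 1 with hi0 | hi1
            · -- i = 0
              have ei : i = ⟨0, hk0⟩ := Fin.ext (by simp only [Fin.val_mk]; omega)
              rcases Nat.lt_or_ge s.val 2 with hs1 | hs2
              · -- s = 1, t = 1
                have hsv : s.val = 1 := by omega
                have et : t = ⟨1, by omega⟩ := Fin.ext (by simp only [Fin.val_mk]; exact h1 hsv)
                right
                rw [ei, et, hb0.1, hb1.1]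
                norm_num
              · left
                rw [ei, hb0.1, hlxval s hs2]
                have : (2:ℝ) ≤ (s.val:ℝ) := by exact_mod_cast hs2
                linarith
            · rcases Nat.lt_or_ge i.val 2 with hi1' | hi2
              · -- i = 1
                have ei : i = ⟨1, by omega⟩ := Fin.ext (by simp only [Fin.val_mk]; omega)
                left
                rw [ei, hb1.1, hlxval s (by omega)]
                have : (2:ℝ) ≤ (s.val:ℝ) := by
                  have : 2 ≤ s.val := by omega
                  exact_mod_cast this
                linarith
              · left
                rw [hlxval i hi2, hlxval s (by omega)]
                have : (i.val:ℝ) < (s.val:ℝ) := by exact_mod_cast hlt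
                linarith
          · -- block before i
            have hti : t.val < i.val := by omega
            rcases Nat.lt_or_ge t.val 1 with ht0 | ht1
            · -- t = 0, s = 0
              have et : t = ⟨0, hk0⟩ := Fin.ext (by simp only [Fin.val_mk]; omega)
              have es : s = ⟨0, hk0⟩ := Fin.ext (by simp only [Fin.val_mk]; omega)
              rcases Nat.lt_or_ge i.val 2 with hi1 | hi2
              · -- i = 1
                have ei : i = ⟨1, by omega⟩ := Fin.ext (by simp only [Fin.val_mk]; omega)
                left
                rw [ei, es, hb1.1, hb0.1]
                norm_num
              · right
                rw [et, hb0.1, hlxval i hi2]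
                have : (2:ℝ) ≤ (i.val:ℝ) := by exact_mod_cast hi2
                linarith
            · rcases Nat.lt_or_ge t.val 2 with ht1' | ht2
              · -- t = 1
                have et : t = ⟨1, by omega⟩ := Fin.ext (by simp only [Fin.val_mk]; omega)
                right
                rw [et, hb1.1, hlxval i (by omega)]
                have : (2:ℝ) ≤ (i.val:ℝ) := by
                  have : 2 ≤ i.val := by omega
                  exact_mod_cast this
                linarith
              · right
                rw [hlxval t ht2, hlxval i (by omega)]
                have : (t.val:ℝ) < (i.val:ℝ) := by exact_mod_cast hti
                linarith
        apply VPGaux.LShape_disj_leaf (hintbounds w hw).1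
        · linarith [(hly01 i).2]
        · rcases hsep with hl | hl
          · exact Or.inr (Or.inl (by rw [el]; exact hl))
          · exact Or.inr (Or.inr (by rw [er]; exact hl))
      · intro hadj
        rcases VPGaux.adj_cases hT r' hadj with ⟨ha, hd⟩ | ⟨ha, hd⟩
        · obtain ⟨z, hz1, hz2, hz3⟩ := VPGaux.parent_exists hT (show b i ≠ r' from hne_r i)
          have hwz : w = z := VPGaux.uniq_nbr (hdeg_b i) hadj hz1.symm
          rw [hwz] at hd
          omega
        · exact hanc ha
  have hII : ∀ w x : V, 2 ≤ T.degree w → 2 ≤ T.degree x → w ≠ x →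
      ((LShape (lx w) (rx w) (ly w) (ry w) ∩
        LShape (lx x) (rx x) (ly x) (ry x)).Nonempty ↔
      (T.Adj w x ∨ ∃ m : Fin k,
        (w = b m ∧ x = b (cidx hk0 ((m : ℕ) + 1))) ∨
        (x = b m ∧ w = b (cidx hk0 ((m : ℕ) + 1))))) := by
    have hblksep : ∀ s t s' t' : Fin k, s.val ≤ t.val → s'.val ≤ t'.val →
        (s.val = 0 → t.val = 0) → (s'.val = 1 → t'.val = 1) →
        t.val < s'.val → lx (b t) < lx (b s') ∨ lx (b t') < lx (b s) := by
      intro s t s' t' hst hst' h0 h1' hts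
      rcases Nat.lt_or_ge t.val 1 with ht0 | ht1
      · -- t = 0, s = 0
        have es : s = ⟨0, hk0⟩ := Fin.ext (by simp only [Fin.val_mk]; omega)
        have et : t = ⟨0, hk0⟩ := Fin.ext (by simp only [Fin.val_mk]; omega)
        rcases Nat.lt_or_ge s'.val 2 with hs1 | hs2
        · -- s' = 1, t' = 1
          have hsv : s'.val = 1 := by omega
          have et' : t' = ⟨1, by omega⟩ := Fin.ext (by simp only [Fin.val_mk]; exact h1' hsv)
          right
          rw [es, et', hb0.1, hb1.1]
          norm_num
        · left
          rw [et, hb0.1, hlxval s' hs2]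
          have : (2:ℝ) ≤ (s'.val:ℝ) := by exact_mod_cast hs2
          linarith
      · rcases Nat.lt_or_ge t.val 2 with ht1' | ht2
        · -- t = 1
          have et : t = ⟨1, by omega⟩ := Fin.ext (by simp only [Fin.val_mk]; omega)
          left
          rw [et, hb1.1, hlxval s' (by omega)]
          have : (2:ℝ) ≤ (s'.val:ℝ) := by
            have : 2 ≤ s'.val := by omega
            exact_mod_cast this
          linarith
        · left
          rw [hlxval t ht2, hlxval s' (by omega)]
          have : (t.val:ℝ) < (s'.val:ℝ) := by exact_mod_cast hts
          linarith
    have hAncCase : ∀ a c : V, 2 ≤ T.degree a → 2 ≤ T.degree c → a ≠ c →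
        IsAncestor T r' a c →
        ((LShape (lx a) (rx a) (ly a) (ry a) ∩
          LShape (lx c) (rx c) (ly c) (ry c)).Nonempty ↔ T.Adj a c) := by
      intro a c ha2 hc2 hne hanc
      obtain ⟨ea3, ea4, haly2⟩ := hlyw a ha2
      obtain ⟨ec3, ec4, hcly2⟩ := hlyw c hc2
      have hdd := VPGaux.anc_dist hT hanc
      have hdp : 1 ≤ T.dist a c := by
        have : T.dist a c ≠ 0 := fun e => hne ((conn.dist_eq_zero_iff).mp e)
        omega
      by_cases hone : T.dist r' c = T.dist r' a + 1
      · have hadj : T.Adj a c := VPGaux.anc_adj hT hanc hone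
        apply iff_of_true _ hadj
        have hryc : ry c = ly a := by
          rw [ec4, ea3, hone]
          push_cast
          ring
        have hcr : c ≠ r' := by
          intro e
          rw [e, SimpleGraph.dist_self] at hone
          omega
        obtain ⟨s', t', hst', h0', h1', hblk', el', er'⟩ := hstruct c hc2 hcr
        have hxbounds : lx a ≤ lx c ∧ lx c ≤ rx a := by
          by_cases har : a = r'
          · subst har
            rw [hr'c.1, hr'c.2.1, el']
            exact ⟨hlx_ge1 s', hlx_lek s'⟩
          · obtain ⟨s, t, hst, h0, h1, hblk, el, er⟩ := hstruct a ha2 har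
            have hsub : b s' ∈ LeafSet T r' a := by
              have hmem : b s' ∈ LeafSet T r' c := by
                rw [hblk']; exact ⟨s', le_rfl, hst', rfl⟩
              exact ⟨hmem.1, VPGaux.anc_trans hT hanc hmem.2⟩
            rw [hblk] at hsub
            obtain ⟨m, hm1, hm2, hbm⟩ := hsub
            have hsm : s' = m := hinj hbm
            rw [el, er, el', hsm]
            exact hbetween s t m h0 h1 hm1 hm2
        refine ⟨(lx c, ly a), Or.inr ⟨rfl, hxbounds.1, hxbounds.2⟩, Or.inl ⟨rfl, ?_, ?_⟩⟩
        · show ly c ≤ ly a; rw [← hryc, ec3, ec4]; linarith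
        · show ly a ≤ ry c; rw [hryc]
      · apply iff_of_false
        · apply VPGaux.LShape_disj_y (by rw [ea3, ea4]; linarith) (by rw [ec3, ec4]; linarith)
          right
          rw [ec4, ea3]
          have hgap : T.dist r' a + 2 ≤ T.dist r' c := by omega
          have hc : (T.dist r' a : ℝ) + 2 ≤ (T.dist r' c : ℝ) := by exact_mod_cast hgap
          linarith
        · intro hadj
          rcases VPGaux.adj_cases hT r' hadj with ⟨ha, hd⟩ | ⟨ha, hd⟩
          · exact hone hd
          · exact hne (VPGaux.anc_antisymm hT hanc ha)
    intro w x hw hx hwx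
    have hwnotb : ∀ m : Fin k, w ≠ b m := by
      intro m e; have := hdeg_b m; rw [e] at hw; omega
    have hxnotb : ∀ m : Fin k, x ≠ b m := by
      intro m e; have := hdeg_b m; rw [e] at hx; omega
    have hRiff : (T.Adj w x ∨ ∃ m : Fin k,
        (w = b m ∧ x = b (cidx hk0 ((m : ℕ) + 1))) ∨
        (x = b m ∧ w = b (cidx hk0 ((m : ℕ) + 1)))) ↔ T.Adj w x := by
      constructor
      · rintro (hadj | ⟨m, ⟨e1, e2⟩ | ⟨e1, e2⟩⟩)
        · exact hadj
        · exact absurd e2 (hxnotb _)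
        · exact absurd e2 (hwnotb _)
      · exact Or.inl
    rw [hRiff]
    by_cases haw : IsAncestor T r' w x
    · exact hAncCase w x hw hx hwx haw
    · by_cases hax : IsAncestor T r' x w
      · have hres := hAncCase x w hx hw (Ne.symm hwx) hax
        rw [Set.inter_comm, hres]
        exact T.adj_comm x w
      · apply iff_of_false
        · -- incomparable: x-separation
          have hwr : w ≠ r' := fun e => haw (by rw [e]; exact VPGaux.isAncestor_root r' x)
          have hxr : x ≠ r' := fun e => hax (by rw [e]; exact VPGaux.isAncestor_root r' w)
          obtain ⟨s, t, hst, h0, h1, hblk, el, er⟩ := hstruct w hw hwr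
          obtain ⟨s', t', hst', h0', h1', hblk', el', er'⟩ := hstruct x hx hxr
          have hcommon : ∀ m : Fin k, ¬ (b m ∈ LeafSet T r' w ∧ b m ∈ LeafSet T r' x) := by
            rintro m ⟨h1m, h2m⟩
            rcases VPGaux.anc_total hT h1m.2 h2m.2 with hc | hc
            · exact haw hc
            · exact hax hc
          have hstv : s.val ≤ t.val := hst
          have hstv' : s'.val ≤ t'.val := hst'
          have hsepidx : t.val < s'.val ∨ t'.val < s.val := by
            by_contra hcon
            push_neg at hcon
            obtain ⟨hc1, hc2⟩ := hcon
            rcases le_or_gt s.val s'.val with hss | hss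
            · refine hcommon s' ⟨?_, ?_⟩
              · rw [hblk]; exact ⟨s', hss, hc1, rfl⟩
              · rw [hblk']; exact ⟨s', le_rfl, hst', rfl⟩
            · refine hcommon s ⟨?_, ?_⟩
              · rw [hblk]; exact ⟨s, le_rfl, hst, rfl⟩
              · rw [hblk']; exact ⟨s, by omega, hc2, rfl⟩
          apply VPGaux.LShape_disj_x (hintbounds w hw).1 (hintbounds x hx).1
          rcases hsepidx with hsep | hsep
          · rcases hblksep s t s' t' hstv hstv' h0 h1' hsep with hl | hl
            · exact Or.inl (by rw [er, el']; exact hl)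
            · exact Or.inr (by rw [er', el]; exact hl)
          · rcases hblksep s' t' s t hstv' hstv h0' h1 hsep with hl | hl
            · exact Or.inr (by rw [er', el]; exact hl)
            · exact Or.inl (by rw [er, el']; exact hl)
        · intro hadj
          rcases VPGaux.adj_cases hT r' hadj with ⟨ha, hd⟩ | ⟨ha, hd⟩
          · exact haw ha
          · exact hax ha
  -- symmetric closure dispatch
  have hflip : ∀ a c : V,
      ((LShape (lx a) (rx a) (ly a) (ry a) ∩
        LShape (lx c) (rx c) (ly c) (ry c)).Nonempty ↔
      (T.Adj a c ∨ ∃ m : Fin k,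
        (a = b m ∧ c = b (cidx hk0 ((m : ℕ) + 1))) ∨
        (c = b m ∧ a = b (cidx hk0 ((m : ℕ) + 1))))) →
      ((LShape (lx c) (rx c) (ly c) (ry c) ∩
        LShape (lx a) (rx a) (ly a) (ry a)).Nonempty ↔
      (T.Adj c a ∨ ∃ m : Fin k,
        (c = b m ∧ a = b (cidx hk0 ((m : ℕ) + 1))) ∨
        (a = b m ∧ c = b (cidx hk0 ((m : ℕ) + 1))))) := by
    intro a c hiff
    rw [Set.inter_comm, hiff]
    constructor
    · rintro (hadj | ⟨m, hm | hm⟩)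
      · exact Or.inl hadj.symm
      · exact Or.inr ⟨m, Or.inr hm⟩
      · exact Or.inr ⟨m, Or.inl hm⟩
    · rintro (hadj | ⟨m, hm | hm⟩)
      · exact Or.inl hadj.symm
      · exact Or.inr ⟨m, Or.inr hm⟩
      · exact Or.inr ⟨m, Or.inl hm⟩
  by_cases hu1 : T.degree u = 1
  · obtain ⟨i, rfl⟩ := (hleaf u).mp hu1
    by_cases hv1 : T.degree v = 1
    · obtain ⟨j, rfl⟩ := (hleaf v).mp hv1
      have hij : i ≠ j := fun e => huv (congrArg b e)
      rcases Nat.lt_or_ge i.val j.val with hlt | hge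
      · exact hLL i j hlt
      · have : j.val < i.val := by
          rcases Nat.lt_or_ge j.val i.val with h' | h'
          · exact h'
          · exact absurd (Fin.ext (by omega)) hij
        exact hflip _ _ (hLL j i this)
    · exact hLI i v (by have := hdegpos v; omega)
  · have hu2 : 2 ≤ T.degree u := by have := hdegpos u; omega
    by_cases hv1 : T.degree v = 1
    · obtain ⟨j, rfl⟩ := (hleaf v).mp hv1
      exact hflip _ _ (hLI j u hu2)
    · exact hII u v hu2 (by have := hdegpos v; omega) huv
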